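/- Let R be a ring, n ≥ 1, d ∈ ℕ* ∪ {∞}, and M a finitely generated R-module. Then M is FP_n^{≤d}-projective if and only if M is finitely n-presented with projective dimension at most d. -/

import Mathlib

universe u

/-- `M` is a finitely `n`-presented `R`-module. -/
def FinNPres (R : Type u) [Ring R] : ℕ → (M : Type u) → [AddCommGroup M] → [Module R M] → Prop
  | 0, M, _, _ => Module.Finite R M
  | n+1, M, _, _ => ∃ (k : ℕ) (f : (Fin k → R) →ₗ[R] M), Function.Surjective f ∧
      FinNPres R n (LinearMap.ker f)

/-- `M` has projective dimension at most `d` (finite `d`). -/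
def ProjDimLE (R : Type u) [Ring R] : ℕ → (M : Type u) → [AddCommGroup M] → [Module R M] → Prop
  | 0, M, _, _ => Module.Projective R M
  | d+1, M, _, _ => ∃ (ι : Type u) (f : (ι →₀ R) →ₗ[R] M), Function.Surjective f ∧
      ProjDimLE R d (LinearMap.ker f)

/-- Projective dimension at most `d` for `d : ℕ∞`; `d = ⊤` imposes no condition. -/
def ProjDimLE' (R : Type u) [Ring R] (d : ℕ∞) (M : Type u) [AddCommGroup M] [Module R M] : Prop :=
  ∀ k : ℕ, (k : ℕ∞) = d → ProjDimLE R k M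

/-- `Ext¹_R(M, N) = 0`, expressed by the splitting of all extensions of `M` by `N`. -/
def Ext1Zero (R : Type u) [Ring R] (M N : Type u) [AddCommGroup M] [Module R M]
    [AddCommGroup N] [Module R N] : Prop :=
  ∀ (X : Type u) [AddCommGroup X] [Module R X] (i : N →ₗ[R] X) (p : X →ₗ[R] M),
    Function.Injective i → Function.Surjective p → LinearMap.range i = LinearMap.ker p →
    ∃ r : X →ₗ[R] N, r ∘ₗ i = LinearMap.id

/-- `N` is `FPₙ^{≤d}`-injective: `Ext¹_R(K, N) = 0` for every finitely `n`-presented `K`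
of projective dimension at most `d`. -/
def FPdInj (R : Type u) [Ring R] (n : ℕ) (d : ℕ∞) (N : Type u)
    [AddCommGroup N] [Module R N] : Prop :=
  ∀ (K : Type u) [AddCommGroup K] [Module R K],
    FinNPres R n K → ProjDimLE' R d K → Ext1Zero R K N

/-- `M` is `FPₙ^{≤d}`-projective: `Ext¹_R(M, N) = 0` for every `FPₙ^{≤d}`-injective `N`. -/
def FPdProj (R : Type u) [Ring R] (n : ℕ) (d : ℕ∞) (M : Type u)
    [AddCommGroup M] [Module R M] : Prop :=
  ∀ (N : Type u) [AddCommGroup N] [Module R N], FPdInj R n d N → Ext1Zero R M N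

/-!
`Ext¹` is handled elementarily, as the splitting of all extensions. Everything runs on dimension
shifting: for a projective presentation `p : F ↠ M` and an embedding `N ↪ E` into an injective
module, `Ext¹(M, E/N) = 0 ↔ Ext¹(ker p, N) = 0`. So if `Ext¹(M, -)` vanishes on the right
orthogonal of the modules of projective dimension `≤ e + 1` (resp. of the finitely
`(m + 1)`-presented ones), `Ext¹(ker p, -)` vanishes on that of projective dimension `≤ e`
(resp. finitely `m`-presented), and both conclusions follow by induction.

The remaining input is that the kernel `K` of a presentation `Rᵏ ↠ M` is finitely generated. Test
`M` against the families in `∏ₛ E(K/⟨s⟩)`, over finite `s ⊆ K` with `E(-)` injective, that vanish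
for all large `s`. Maps from finitely generated modules into it vanish at all large `s` uniformly,
so its `Ext¹` against finitely presented modules is zero; extending the canonical map
`K → ∏ₛ E(K/⟨s⟩)` to `Rᵏ` then forces `K = ⟨s⟩` for some `s`.
-/

open LinearMap

theorem Module.exists_projective_surjective (R : Type u) [Ring R] (M : Type u) [AddCommGroup M]
    [Module R M] : ∃ (F : Type u) (_ : AddCommGroup F) (_ : Module R F) (_ : Module.Projective R F)
      (p : F →ₗ[R] M), Function.Surjective p :=
  ⟨M →₀ R, inferInstance, inferInstance, inferInstance, _,
    Finsupp.linearCombination_id_surjective R M⟩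

open CategoryTheory in
theorem Module.exists_injective_embedding (R : Type u) [Ring R] (N : Type u) [AddCommGroup N]
    [Module R N] : ∃ (E : Type u) (_ : AddCommGroup E) (_ : Module R E) (_ : Module.Injective R E)
      (j : N →ₗ[R] E), Function.Injective j := by
  let ι := Injective.ι (ModuleCat.of R N)
  have := Module.injective_module_of_injective_object R _
    (inj := Injective.injective_under (ModuleCat.of R N))
  exact ⟨_, _, _, this, ι.hom, (ModuleCat.mono_iff_injective ι).1 inferInstance⟩

section Factorization

variable {R : Type u} [Ring R] {M N E F X : Type u}
  [AddCommGroup M] [Module R M] [AddCommGroup N] [Module R N] [AddCommGroup E] [Module R E]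
  [AddCommGroup F] [Module R F] [AddCommGroup X] [Module R X]

theorem LinearMap.exists_comp_eq_of_range_le {j : N →ₗ[R] E} (hj : Function.Injective j)
    {w : X →ₗ[R] E} (h : range w ≤ range j) : ∃ r : X →ₗ[R] N, j ∘ₗ r = w :=
  ⟨(LinearEquiv.ofInjective j hj).symm ∘ₗ w.codRestrict (range j) fun x => h ⟨x, rfl⟩,
    by ext x; simp⟩

theorem LinearMap.exists_comp_eq_of_ker_le {p : F →ₗ[R] M} (hp : Function.Surjective p)
    {τ : F →ₗ[R] X} (h : ker p ≤ ker τ) : ∃ σ : M →ₗ[R] X, σ ∘ₗ p = τ :=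
  ⟨(ker p).liftQ τ h ∘ₗ (p.quotKerEquivOfSurjective hp).symm, by ext x; simp⟩

theorem LinearMap.ker_le_ker_sub {p : F →ₗ[R] M} {G H : F →ₗ[R] X}
    (h : G ∘ₗ (ker p).subtype = H ∘ₗ (ker p).subtype) : ker p ≤ ker (G - H) := fun k hk => by
  simpa [sub_eq_zero] using LinearMap.congr_fun h ⟨k, hk⟩

end Factorization

section Ext1Zero

variable {R : Type u} [Ring R] {M N E F : Type u}
  [AddCommGroup M] [Module R M] [AddCommGroup N] [Module R N] [AddCommGroup E] [Module R E]
  [AddCommGroup F] [Module R F]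

theorem ext1Zero_iff_exists_section : Ext1Zero R M N ↔
    ∀ (X : Type u) [AddCommGroup X] [Module R X] (i : N →ₗ[R] X) (p : X →ₗ[R] M),
      Function.Injective i → Function.Surjective p → range i = ker p →
      ∃ s : M →ₗ[R] X, p ∘ₗ s = LinearMap.id := by
  have split {X : Type u} [AddCommGroup X] [Module R X] {i : N →ₗ[R] X} {p : X →ₗ[R] M}
      (hi : Function.Injective i) (hp : Function.Surjective p) (hip : range i = ker p) :=
    (Function.Exact.split_tfae (exact_iff.2 hip.symm) hi hp).out 0 1
  exact ⟨fun h X _ _ i p hi hp hip => (split hi hp hip).2 (h X i p hi hp hip),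
    fun h X _ _ i p hi hp hip => (split hi hp hip).1 (h X i p hi hp hip)⟩

theorem Ext1Zero.exists_extend (hMN : Ext1Zero R M N) {p : F →ₗ[R] M}
    (hp : Function.Surjective p) (φ : ker p →ₗ[R] N) :
    ∃ ψ : F →ₗ[R] N, ψ ∘ₗ (ker p).subtype = φ := by
  -- `(N × F) ⧸ D` is the pushout of `ker p ↪ F` along `φ`.
  let D := range (φ.prod (-(ker p).subtype))
  let i := D.mkQ ∘ₗ inl R N F
  have hD : D ≤ ker (p ∘ₗ snd R N F) := by
    rintro _ ⟨k, rfl⟩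
    simp
  let q := D.liftQ (p ∘ₗ snd R N F) hD
  have hmk (a : N) (k : ker p) : D.mkQ (a, k) = i (a + φ k) :=
    (Submodule.Quotient.eq D).2 ⟨-k, by simp⟩
  have hi : Function.Injective i := by
    refine (injective_iff_map_eq_zero i).2 fun a ha => ?_
    obtain ⟨k, hk⟩ := (Submodule.Quotient.mk_eq_zero D).1 ha
    have hk0 : k = 0 := by simpa using congrArg Prod.snd hk
    simpa [hk0] using (congrArg Prod.fst hk).symm
  have hq : Function.Surjective q := fun m =>
    let ⟨x, hx⟩ := hp m
    ⟨D.mkQ (0, x), by simpa [q] using hx⟩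
  have hiq : range i = ker q := by
    refine le_antisymm (range_le_ker_iff.2 (by ext; simp [q, i])) fun x hx => ?_
    obtain ⟨⟨a, f⟩, rfl⟩ := D.mkQ_surjective x
    have hf : f ∈ ker p := by simpa [q] using hx
    exact ⟨a + φ ⟨f, hf⟩, (hmk a ⟨f, hf⟩).symm⟩
  obtain ⟨r, hr⟩ := hMN _ i q hi hq hiq
  refine ⟨r ∘ₗ D.mkQ ∘ₗ inr R N F, ?_⟩
  ext k
  simpa [hmk] using LinearMap.congr_fun hr (φ k)

theorem ext1Zero_of_forall_exists_extend [Module.Projective R F] {p : F →ₗ[R] M}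
    (hp : Function.Surjective p)
    (h : ∀ φ : ker p →ₗ[R] N, ∃ ψ : F →ₗ[R] N, ψ ∘ₗ (ker p).subtype = φ) : Ext1Zero R M N := by
  refine ext1Zero_iff_exists_section.2 fun X _ _ i π hi hπ hiπ => ?_
  obtain ⟨q, hq⟩ := Module.projective_lifting_property π p hπ
  have hqker : range (q ∘ₗ (ker p).subtype) ≤ range i := by
    rintro _ ⟨⟨k, hk⟩, rfl⟩
    rw [hiπ, mem_ker]
    exact (LinearMap.congr_fun hq k).trans hk
  obtain ⟨φ, hφ⟩ := exists_comp_eq_of_range_le hi hqker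
  obtain ⟨ψ, hψ⟩ := h φ
  obtain ⟨σ, hσ⟩ := exists_comp_eq_of_ker_le hp (ker_le_ker_sub (G := q) (H := i ∘ₗ ψ) <| by
    rw [comp_assoc, hψ, hφ])
  refine ⟨σ, (cancel_right hp).1 ?_⟩
  rw [comp_assoc, hσ, comp_sub, ← comp_assoc, range_le_ker_iff.1 hiπ.le, zero_comp, sub_zero, hq,
    id_comp]

theorem Ext1Zero.exists_lift {S : Type u} [AddCommGroup S] [Module R S] (hSN : Ext1Zero R S N)
    {j : N →ₗ[R] E} (hj : Function.Injective j) (h : S →ₗ[R] E ⧸ range j) :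
    ∃ g : S →ₗ[R] E, (range j).mkQ ∘ₗ g = h := by
  -- Lift `h` on a projective cover of `S`, then correct the lift on the kernel so that it descends.
  obtain ⟨F, _, _, _, p, hp⟩ := Module.exists_projective_surjective R S
  obtain ⟨G, hG⟩ :=
    Module.projective_lifting_property (range j).mkQ (h ∘ₗ p) (range j).mkQ_surjective
  have hGker : range (G ∘ₗ (ker p).subtype) ≤ range j := by
    rintro _ ⟨⟨k, hk⟩, rfl⟩
    rw [← Submodule.ker_mkQ (range j), mem_ker]
    exact (LinearMap.congr_fun hG k).trans (by simp [mem_ker.1 hk])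
  obtain ⟨φ, hφ⟩ := exists_comp_eq_of_range_le hj hGker
  obtain ⟨ψ, hψ⟩ := hSN.exists_extend hp φ
  obtain ⟨g, hg⟩ := exists_comp_eq_of_ker_le hp (ker_le_ker_sub (G := G) (H := j ∘ₗ ψ) <| by
    rw [comp_assoc, hψ, hφ])
  refine ⟨g, (cancel_right hp).1 ?_⟩
  have hjq : (range j).mkQ ∘ₗ j = 0 := range_le_ker_iff.1 (Submodule.ker_mkQ _).ge
  rw [comp_assoc, hg, comp_sub, ← comp_assoc, hjq, zero_comp, sub_zero, hG]

theorem ext1Zero_of_forall_exists_lift {S : Type u} [AddCommGroup S] [Module R S]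
    [Module.Injective R E] {j : N →ₗ[R] E} (hj : Function.Injective j)
    (h : ∀ h : S →ₗ[R] E ⧸ range j, ∃ g : S →ₗ[R] E, (range j).mkQ ∘ₗ g = h) :
    Ext1Zero R S N := by
  intro X _ _ i π hi hπ hiπ
  obtain ⟨θ, hθ⟩ := Module.Injective.out i hi j
  obtain ⟨h', hh'⟩ := exists_comp_eq_of_ker_le hπ (τ := (range j).mkQ ∘ₗ θ) <| by
    rw [← hiπ]
    rintro _ ⟨a, rfl⟩
    simp [hθ]
  obtain ⟨g, hg⟩ := h h'
  obtain ⟨r, hr⟩ := exists_comp_eq_of_range_le hj (w := θ - g ∘ₗ π) <| by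
    rw [← Submodule.ker_mkQ (range j), range_le_ker_iff, comp_sub, ← comp_assoc, hg, hh', sub_self]
  refine ⟨r, ext fun a => hj ?_⟩
  have hπi : i a ∈ ker π := hiπ ▸ mem_range_self i a
  simpa [hθ, mem_ker.1 hπi] using LinearMap.congr_fun hr (i a)

theorem ext1Zero_quotient_iff_ext1Zero_ker [Module.Projective R F] [Module.Injective R E]
    {p : F →ₗ[R] M} (hp : Function.Surjective p) {j : N →ₗ[R] E} (hj : Function.Injective j) :
    Ext1Zero R M (E ⧸ range j) ↔ Ext1Zero R (ker p) N := by
  constructor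
  · refine fun hM => ext1Zero_of_forall_exists_lift hj fun h => ?_
    obtain ⟨H, hH⟩ := hM.exists_extend hp h
    obtain ⟨G, hG⟩ := Module.projective_lifting_property (range j).mkQ H (range j).mkQ_surjective
    exact ⟨G ∘ₗ (ker p).subtype, by rw [← comp_assoc, hG, hH]⟩
  · refine fun hS => ext1Zero_of_forall_exists_extend hp fun h => ?_
    obtain ⟨g, hg⟩ := hS.exists_lift hj h
    obtain ⟨G, hG⟩ := Module.Injective.out (ker p).subtype (ker p).injective_subtype g
    refine ⟨(range j).mkQ ∘ₗ G, ?_⟩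
    ext k
    rw [← hg]
    exact congrArg (range j).mkQ (hG k)

theorem ext1Zero_of_projective [Module.Projective R M] : Ext1Zero R M N :=
  ext1Zero_iff_exists_section.2 fun _ _ _ _ π _ hπ _ => Module.projective_lifting_property π id hπ

theorem Module.Projective.of_forall_ext1Zero
    (h : ∀ (N : Type u) [AddCommGroup N] [Module R N], Ext1Zero R M N) :
    Module.Projective R M := by
  obtain ⟨F, _, _, _, p, hp⟩ := Module.exists_projective_surjective R M
  obtain ⟨s, hs⟩ := ext1Zero_iff_exists_section.1 (h (ker p)) F (ker p).subtype p
    (ker p).injective_subtype hp (ker p).range_subtype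
  exact .of_split s p hs

end Ext1Zero

section ProjDim

variable {R : Type u} [Ring R]

theorem projDimLE_of_forall_ext1Zero : ∀ (e : ℕ) (M : Type u) [AddCommGroup M] [Module R M],
    (∀ (N : Type u) [AddCommGroup N] [Module R N],
      (∀ (K : Type u) [AddCommGroup K] [Module R K], ProjDimLE R e K → Ext1Zero R K N) →
        Ext1Zero R M N) → ProjDimLE R e M
  | 0, M, _, _, hM => Module.Projective.of_forall_ext1Zero fun N _ _ =>
      hM N fun K _ _ (hK : Module.Projective R K) => ext1Zero_of_projective
  | e + 1, M, _, _, hM => by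
    have hp := Finsupp.linearCombination_id_surjective R M
    refine ⟨M, _, hp, projDimLE_of_forall_ext1Zero e _ fun N _ _ hN => ?_⟩
    obtain ⟨E, _, _, _, j, hj⟩ := Module.exists_injective_embedding R N
    rw [← ext1Zero_quotient_iff_ext1Zero_ker hp hj]
    refine hM _ fun K _ _ ⟨_, f, hf, hker⟩ => ?_
    rw [ext1Zero_quotient_iff_ext1Zero_ker hf hj]
    exact hN _ hker

theorem FPdProj.projDimLE' {n : ℕ} {d : ℕ∞} {M : Type u} [AddCommGroup M] [Module R M]
    (h : FPdProj R n d M) : ProjDimLE' R d M := by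
  rintro e rfl
  exact projDimLE_of_forall_ext1Zero e M fun N _ _ hN => h N fun K _ _ _ hK => hN K (hK e rfl)

end ProjDim

section EventuallyZero

variable {R : Type u} [Ring R] {ι : Type u} {l : Filter ι} {E : ι → Type u}
  [∀ i, AddCommGroup (E i)] [∀ i, Module R (E i)]

variable (R l E) in
def eventuallyZero : Submodule R (Π i, E i) where
  carrier := {x | ∀ᶠ i in l, x i = 0}
  add_mem' hx hy := (hx.and hy).mono fun i h => by simp [h.1, h.2]
  zero_mem' := .of_forall fun _ => rfl
  smul_mem' c _ hx := hx.mono fun i h => by simp [h]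

theorem eventually_forall_apply_eq_zero {S : Type u} [AddCommGroup S] [Module R S]
    [Module.Finite R S] (g : S →ₗ[R] eventuallyZero R l E) :
    ∀ᶠ i in l, ∀ s, (g s : Π i, E i) i = 0 := by
  obtain ⟨t, ht⟩ := Module.Finite.fg_top (R := R) (M := S)
  filter_upwards [(Filter.eventually_all_finset t).2 fun s _ => (g s).2] with i hi s
  have : Submodule.span R t ≤ ker (proj i ∘ₗ (eventuallyZero R l E).subtype ∘ₗ g) :=
    Submodule.span_le.2 hi
  rw [ht] at this
  exact this Submodule.mem_top

theorem exists_extend_of_eventuallyZero [∀ i, Module.Injective R (E i)] {F : Type u}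
    [AddCommGroup F] [Module R F] (S : Submodule R F) [Module.Finite R S]
    (g : S →ₗ[R] eventuallyZero R l E) :
    ∃ G : F →ₗ[R] eventuallyZero R l E, G ∘ₗ S.subtype = g := by
  classical
  choose G hG using fun i => Module.Injective.out S.subtype S.injective_subtype
    (proj i ∘ₗ (eventuallyZero R l E).subtype ∘ₗ g)
  -- Extending by zero wherever `g` vanishes keeps the extension eventually zero.
  let H : F →ₗ[R] Π i, E i := pi fun i => if ∀ s, (g s : Π i, E i) i = 0 then 0 else G i
  have hH x : H x ∈ eventuallyZero R l E :=
    (eventually_forall_apply_eq_zero g).mono fun i hi => by simp [H, hi]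
  refine ⟨H.codRestrict _ hH, ?_⟩
  ext s i
  change (if ∀ s, (g s : Π i, E i) i = 0 then 0 else G i) s = _
  split_ifs with hi
  · exact (hi s).symm
  · exact hG i s

theorem ext1Zero_eventuallyZero [∀ i, Module.Injective R (E i)] {K F : Type u}
    [AddCommGroup K] [Module R K] [AddCommGroup F] [Module R F] [Module.Projective R F]
    {p : F →ₗ[R] K} (hp : Function.Surjective p) [Module.Finite R (ker p)] :
    Ext1Zero R K (eventuallyZero R l E) :=
  ext1Zero_of_forall_exists_extend hp fun φ => exists_extend_of_eventuallyZero _ φ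

end EventuallyZero

section FinNPres

variable {R : Type u} [Ring R]

theorem projDimLE'_top (M : Type u) [AddCommGroup M] [Module R M] : ProjDimLE' R ⊤ M :=
  fun k hk => absurd hk (ENat.natCast_ne_top k)

theorem FPdProj.top {n : ℕ} {d : ℕ∞} {M : Type u} [AddCommGroup M] [Module R M]
    (h : FPdProj R n d M) : FPdProj R n ⊤ M :=
  fun N _ _ hN => h N fun K _ _ hK _ => hN K hK (projDimLE'_top K)

theorem FinNPres.finite : ∀ {n : ℕ} {M : Type u} [AddCommGroup M] [Module R M],
    FinNPres R n M → Module.Finite R M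
  | 0, _, _, _, h => h
  | _ + 1, _, _, _, ⟨_, f, hf, _⟩ => Module.Finite.of_surjective f hf

theorem Module.Finite.ker_of_fpdProj {m : ℕ} {M F : Type u} [AddCommGroup M] [Module R M]
    [AddCommGroup F] [Module R F] [Module.Finite R F] {p : F →ₗ[R] M}
    (hp : Function.Surjective p) (h : FPdProj R (m + 1) ⊤ M) : Module.Finite R (ker p) := by
  classical
  choose E _ _ _ j hj using fun s : Finset (ker p) =>
    Module.exists_injective_embedding R (ker p ⧸ Submodule.span R (s : Set (ker p)))
  have hN : FPdInj R (m + 1) ⊤ (eventuallyZero R Filter.atTop E) :=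
    fun K _ _ ⟨_, f, hf, hker⟩ _ => have := hker.finite; ext1Zero_eventuallyZero hf
  let φ : ker p →ₗ[R] eventuallyZero R Filter.atTop E :=
    (LinearMap.pi fun s => j s ∘ₗ (Submodule.span R _).mkQ).codRestrict _ fun a =>
      (Filter.eventually_ge_atTop {a}).mono fun s hs => by
        have ha : a ∈ Submodule.span R (s : Set (ker p)) :=
          Submodule.subset_span (Finset.singleton_subset_iff.1 hs)
        simp [(Submodule.Quotient.mk_eq_zero _).2 ha]
  obtain ⟨ψ, hψ⟩ := (h _ hN).exists_extend hp φ
  obtain ⟨s, hs⟩ := (eventually_forall_apply_eq_zero ψ).exists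
  refine ⟨⟨s, eq_top_iff.2 fun a _ => ?_⟩⟩
  have hφa : j s (Submodule.Quotient.mk a) = 0 := by
    have hψa : ψ a = φ a := LinearMap.congr_fun hψ a
    rw [← hs a, hψa]
    rfl
  simpa using (injective_iff_map_eq_zero _).1 (hj s) _ hφa

theorem finNPres_of_fpdProj_top : ∀ (n : ℕ) (M : Type u) [AddCommGroup M] [Module R M],
    Module.Finite R M → FPdProj R n ⊤ M → FinNPres R n M
  | 0, _, _, _, hfg, _ => hfg
  | m + 1, M, _, _, _, h => by
    obtain ⟨k, f, hf⟩ := Module.Finite.exists_fin' R M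
    have := Module.Finite.ker_of_fpdProj hf h
    refine ⟨k, f, hf, finNPres_of_fpdProj_top m _ this fun N _ _ hN => ?_⟩
    obtain ⟨E, _, _, _, j, hj⟩ := Module.exists_injective_embedding R N
    rw [← ext1Zero_quotient_iff_ext1Zero_ker hf hj]
    refine h _ fun K _ _ ⟨_, g, hg, hker⟩ _ => ?_
    rw [ext1Zero_quotient_iff_ext1Zero_ker hg hj]
    exact hN _ hker (projDimLE'_top _)

end FinNPres

theorem fpdProj_iff_fp_n_le_d_general (R : Type u) [Ring R] (n : ℕ) (d : ℕ∞)
    (M : Type u) [AddCommGroup M] [Module R M] (hfg : Module.Finite R M) :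
    FPdProj R n d M ↔ (FinNPres R n M ∧ ProjDimLE' R d M) :=
  ⟨fun h => ⟨finNPres_of_fpdProj_top n M hfg h.top, h.projDimLE'⟩,
    fun ⟨hM, hd⟩ _ _ _ hN => hN M hM hd⟩

/-- A finitely generated module `M` is `FPₙ^{≤d}`-projective if and only if it is finitely
`n`-presented of projective dimension at most `d`. -/
theorem fpdProj_iff_fp_n_le_d (R : Type u) [Ring R] (n : ℕ) (hn : 1 ≤ n) (d : ℕ∞) (hd : 1 ≤ d)
    (M : Type u) [AddCommGroup M] [Module R M] (hfg : Module.Finite R M) :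
    FPdProj R n d M ↔ (FinNPres R n M ∧ ProjDimLE' R d M) :=
  fpdProj_iff_fp_n_le_d_general R n d M hfg
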